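/- Let 𝔤 = 𝔰𝔩₂(ℤ), let e, f, h be the standard basis (e = E₁₂, f = E₂₁, h = E₁₁ − E₂₂), and let S = {e, f, h}. Define S^1 = {0} ∪ S and S^k = ⋃_{0<j<k} ((S^j + S^{k−j}) ∪ [S^j, S^{k−j}]). Then for every m ∈ ℕ with m ≥ 1, |S^m| ≥ 2^{m/2}; in particular 𝔰𝔩₂(ℤ) exhibits exponential growth with respect to S. -/

import Mathlib

open Matrix

/-- The ball `S^k` in the Lie ring of 2×2 integer matrices (with commutator bracket):
`S^1 = {0} ∪ S`, `S^k = ⋃_{0<j<k} ((S^j + S^{k-j}) ∪ [S^j, S^{k-j}])`. -/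
def ball (S : Set (Matrix (Fin 2) (Fin 2) ℤ)) : ℕ → Set (Matrix (Fin 2) (Fin 2) ℤ)
  | 0 => ∅
  | 1 => insert 0 S
  | (n + 2) =>
      ⋃ (j : ℕ) (_ : 0 < j) (_ : j < n + 2),
        (Set.image2 (· + ·) (ball S j) (ball S (n + 2 - j)) ∪
          Set.image2 (fun x y => ⁅x, y⁆) (ball S j) (ball S (n + 2 - j)))
  termination_by k => k
  decreasing_by all_goals omega

/-!
The `(0, 1)`-entry of `⁅h, A⁆` is twice that of `A`, and adding `e` raises it by one. Reading
off binary expansions, every integer in `[0, 2^(k+1))` is the `(0, 1)`-entry of some element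
of `S^(2k+1)`, so `|S^(2k+1)| ≥ 2^(k+1)`, and the balls increase with `k` since `0 ∈ S^1`.
-/

open Set

section

variable {S : Set (Matrix (Fin 2) (Fin 2) ℤ)}

theorem mem_ball_one_of_mem {A : Matrix (Fin 2) (Fin 2) ℤ} (hA : A ∈ S) : A ∈ ball S 1 := by
  rw [ball]
  exact mem_insert_of_mem 0 hA

theorem zero_mem_ball_one : (0 : Matrix (Fin 2) (Fin 2) ℤ) ∈ ball S 1 := by
  rw [ball]
  exact mem_insert 0 S

theorem image2_subset_ball {j k : ℕ} (hj : 0 < j) (hk : 0 < k) :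
    image2 (· + ·) (ball S j) (ball S k) ∪ image2 (fun x y => ⁅x, y⁆) (ball S j) (ball S k) ⊆
      ball S (j + k) := by
  obtain ⟨n, hn⟩ : ∃ n, j + k = n + 2 := ⟨j + k - 2, by omega⟩
  rw [hn, ball]
  refine subset_iUnion₂_of_subset j hj (subset_iUnion_of_subset (by omega) ?_)
  rw [show n + 2 - j = k by omega]

theorem add_mem_ball {j k : ℕ} (hj : 0 < j) (hk : 0 < k) {A B : Matrix (Fin 2) (Fin 2) ℤ}
    (hA : A ∈ ball S j) (hB : B ∈ ball S k) : A + B ∈ ball S (j + k) :=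
  image2_subset_ball hj hk (Or.inl (mem_image2_of_mem hA hB))

theorem lie_mem_ball {j k : ℕ} (hj : 0 < j) (hk : 0 < k) {A B : Matrix (Fin 2) (Fin 2) ℤ}
    (hA : A ∈ ball S j) (hB : B ∈ ball S k) : ⁅A, B⁆ ∈ ball S (j + k) :=
  image2_subset_ball hj hk (Or.inr (mem_image2_of_mem hA hB))

theorem ball_subset_ball_succ {n : ℕ} (hn : 0 < n) : ball S n ⊆ ball S (n + 1) :=
  fun A hA => by simpa using add_mem_ball hn one_pos hA zero_mem_ball_one

theorem ball_subset_ball {a b : ℕ} (ha : 0 < a) (hab : a ≤ b) : ball S a ⊆ ball S b := by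
  induction b, hab using Nat.le_induction with
  | base => exact subset_rfl
  | succ b hab ih => exact ih.trans (ball_subset_ball_succ (ha.trans_le hab))

theorem finite_ball (hS : S.Finite) (n : ℕ) : (ball S n).Finite := by
  induction n using Nat.strong_induction_on with
  | _ n ih =>
    match n with
    | 0 => rw [ball]; exact finite_empty
    | 1 => rw [ball]; exact hS.insert 0
    | n + 2 =>
      rw [ball]
      refine (finite_Iio (n + 2)).iUnion (fun j hj => ?_) fun j hj => ?_
      · refine finite_iUnion fun hj0 => finite_iUnion fun hjn => ?_
        have hj' := ih j hjn
        have hk' := ih (n + 2 - j) (by omega)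
        exact (hj'.image2 _ hk').union (hj'.image2 _ hk')
      · simp only [mem_Iio, not_lt] at hj
        simp [hj.not_gt]

theorem lie_diag_apply_zero_one (A : Matrix (Fin 2) (Fin 2) ℤ) :
    ⁅(single 0 0 1 - single 1 1 1 : Matrix (Fin 2) (Fin 2) ℤ), A⁆ 0 1 = 2 * A 0 1 := by
  simp [Ring.lie_def, mul_apply, single]
  ring

theorem two_mul_mem_image_ball (hh : single 0 0 1 - single 1 1 1 ∈ S) {n : ℕ} (hn : 0 < n)
    {x : ℤ} (hx : x ∈ (· 0 1) '' ball S n) : 2 * x ∈ (· 0 1) '' ball S (n + 1) := by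
  obtain ⟨A, hA, rfl⟩ := hx
  refine ⟨_, ?_, lie_diag_apply_zero_one A⟩
  rw [add_comm]
  exact lie_mem_ball one_pos hn (mem_ball_one_of_mem hh) hA

theorem two_mul_add_one_mem_image_ball (he : single 0 1 1 ∈ S)
    (hh : single 0 0 1 - single 1 1 1 ∈ S) {n : ℕ} (hn : 0 < n) {x : ℤ}
    (hx : x ∈ (· 0 1) '' ball S n) : 2 * x + 1 ∈ (· 0 1) '' ball S (n + 2) := by
  obtain ⟨A, hA, hAx⟩ := two_mul_mem_image_ball hh hn hx
  refine ⟨A + single 0 1 1, add_mem_ball n.succ_pos one_pos hA (mem_ball_one_of_mem he), ?_⟩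
  simp [← hAx]

theorem Ico_subset_image_ball (he : single 0 1 1 ∈ S) (hh : single 0 0 1 - single 1 1 1 ∈ S)
    (k : ℕ) : Ico (0 : ℤ) (2 ^ (k + 1)) ⊆ (· 0 1) '' ball S (2 * k + 1) := by
  induction k with
  | zero =>
    intro x ⟨hx0, hx2⟩
    obtain rfl | rfl : x = 0 ∨ x = 1 := by omega
    · exact ⟨0, zero_mem_ball_one, rfl⟩
    · exact ⟨_, mem_ball_one_of_mem he, by simp⟩
  | succ k ih =>
    intro x ⟨hx0, hx⟩
    have hhalf : x / 2 ∈ (· 0 1) '' ball S (2 * k + 1) :=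
      ih ⟨by omega, by rw [pow_succ] at hx; omega⟩
    rcases Int.emod_two_eq_zero_or_one x with hx2 | hx2
    · rw [← Int.mul_ediv_cancel' (Int.dvd_of_emod_eq_zero hx2)]
      exact image_mono (ball_subset_ball_succ (by omega))
        (two_mul_mem_image_ball hh (by omega) hhalf)
    · rw [← Int.mul_ediv_add_emod x 2, hx2]
      exact two_mul_add_one_mem_image_ball he hh (by omega) hhalf

theorem two_pow_le_ncard_ball (hS : S.Finite) (he : single 0 1 1 ∈ S)
    (hh : single 0 0 1 - single 1 1 1 ∈ S) (k : ℕ) :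
    2 ^ (k + 1) ≤ (ball S (2 * k + 1)).ncard := by
  have hfin := finite_ball hS (2 * k + 1)
  calc 2 ^ (k + 1) = (Ico (0 : ℤ) (2 ^ (k + 1))).ncard := by
        rw [← Finset.coe_Ico, ncard_coe_finset, Int.card_Ico, sub_zero]
        exact_mod_cast (Int.toNat_natCast _).symm
    _ ≤ ((· 0 1) '' ball S (2 * k + 1)).ncard :=
        ncard_le_ncard (Ico_subset_image_ball he hh k) (hfin.image _)
    _ ≤ (ball S (2 * k + 1)).ncard := ncard_image_le hfin

end

/-- For `S = {e, f, h} ⊆ 𝔰𝔩₂(ℤ)` (the standard generators `e = E₁₂`, `f = E₂₁`,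
`h = E₁₁ - E₂₂`), we have `|S^m| ≥ 2^{m/2}` for every `m ≥ 1`. -/
theorem stmt4 (m : ℕ) (hm : 1 ≤ m) :
    (2 : ℝ) ^ ((m : ℝ) / 2) ≤
      ((ball {Matrix.single 0 1 1, Matrix.single 1 0 1,
        Matrix.single 0 0 1 - Matrix.single 1 1 1} m).ncard : ℝ) := by
  obtain ⟨k, hkm, hmk⟩ : ∃ k, 2 * k + 1 ≤ m ∧ m ≤ 2 * k + 2 :=
    ⟨(m - 1) / 2, by omega, by omega⟩
  have hS : Set.Finite {(single 0 1 1 : Matrix (Fin 2) (Fin 2) ℤ), single 1 0 1,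
      single 0 0 1 - single 1 1 1} := toFinite _
  calc (2 : ℝ) ^ ((m : ℝ) / 2) ≤ (2 : ℝ) ^ ((k + 1 : ℕ) : ℝ) := by
        refine Real.rpow_le_rpow_of_exponent_le one_le_two ?_
        rw [div_le_iff₀ two_pos]
        exact_mod_cast (by omega : m ≤ (k + 1) * 2)
    _ ≤ (ball _ (2 * k + 1)).ncard := by
        rw [Real.rpow_natCast]
        exact_mod_cast two_pow_le_ncard_ball hS (Or.inl rfl) (Or.inr (Or.inr rfl)) k
    _ ≤ (ball _ m).ncard := by
        exact_mod_cast ncard_le_ncard (ball_subset_ball (by omega) hkm) (finite_ball hS m)
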